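/- Let Λ ∈ (0,1) and let μ be an eigenmeasure of T with decay rate Λ. Then the measure ν := (1−Λ)⁻¹·μ|_H (the restriction of μ to the hole H, normalized) is a probability measure with ν(Γ₊ ∩ H) = 1, and μ admits the representation μ = (1−Λ)·Σ_{n≥0} Λⁿ·(T̂⁻ⁿ)_*ν, where (T̂⁻ⁿ)_*ν denotes the push-forward of ν under the n-th iterate of T̂⁻¹. -/

import Mathlib

open MeasureTheory Filter Topology ProbabilityTheory
open scoped ENNReal

/-!
Splitting a set `S` according to whether it lies in the hole, the eigenmeasure relation reads
`μ S = μ (S ∩ H) + Λ μ (T̂ S)`. Iterating it `N` times leaves the remainder `Λᴺ μ (T̂ᴺ S) ≤ Λᴺ`,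
which vanishes since `Λ < 1`; this is the series representation. For `S = H` its `n = 0` term is
already `μ H`, so all the others vanish: as `Λ > 0`, `μ (T̂ⁿ H ∩ H) = 0` for `n ≥ 1`, i.e. almost
every point of the hole has a backward orbit that avoids the hole, which is concentration on `Γ₊`.
-/

namespace MeasureTheory

variable {X : Type*} [MeasurableSpace X]

def IsEigenmeasure (T : X ≃ X) (H : Set X) (μ : Measure X) (Λ : ℝ≥0∞) : Prop :=
  ∀ S, MeasurableSet S → μ (T ⁻¹' S ∩ Hᶜ) = Λ * μ S

def backwardTrappedSet (T : X ≃ X) (H : Set X) : Set X :=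
  ⋂ j : ℕ, T^[j + 1] '' Hᶜ

namespace IsEigenmeasure

variable {T : X ≃ X} {H : Set X} {μ : Measure X} {Λ : ℝ≥0∞}

theorem measure_hole_eq [IsProbabilityMeasure μ] (heig : IsEigenmeasure T H μ Λ)
    (hH : MeasurableSet H) : μ H = 1 - Λ := by
  have hcompl : μ Hᶜ = Λ := by simpa using heig _ MeasurableSet.univ
  rw [← hcompl, prob_compl_eq_one_sub hH, ENNReal.sub_sub_cancel ENNReal.one_ne_top prob_le_one]

theorem measure_eq_measure_inter_add (heig : IsEigenmeasure T H μ Λ) (hT' : Measurable T.symm)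
    (hH : MeasurableSet H) {S : Set X} (hS : MeasurableSet S) :
    μ S = μ (S ∩ H) + Λ * μ (T.symm ⁻¹' S) := by
  rw [← heig _ (hT' hS), ← Set.preimage_comp, T.symm_comp_self, Set.preimage_id,
    ← Set.sdiff_eq, measure_inter_add_sdiff S hH]

theorem measure_eq_sum_range_add (heig : IsEigenmeasure T H μ Λ) (hT' : Measurable T.symm)
    (hH : MeasurableSet H) {S : Set X} (hS : MeasurableSet S) (N : ℕ) :
    μ S = ∑ n ∈ Finset.range N, Λ ^ n * μ (T.symm^[n] ⁻¹' S ∩ H) +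
      Λ ^ N * μ (T.symm^[N] ⁻¹' S) := by
  induction N with
  | zero => simp
  | succ N ih =>
    rw [ih, heig.measure_eq_measure_inter_add hT' hH (hT'.iterate N hS), Finset.sum_range_succ,
      Function.iterate_succ, Set.preimage_comp]
    ring

theorem measure_eq_tsum [IsFiniteMeasure μ] (heig : IsEigenmeasure T H μ Λ)
    (hT' : Measurable T.symm) (hH : MeasurableSet H) (hΛ1 : Λ < 1) {S : Set X}
    (hS : MeasurableSet S) :
    μ S = ∑' n, Λ ^ n * μ (T.symm^[n] ⁻¹' S ∩ H) := by
  have hgeom : Tendsto (fun N : ℕ ↦ Λ ^ N * μ Set.univ) atTop (𝓝 0) := by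
    simpa using ENNReal.Tendsto.mul_const (ENNReal.tendsto_pow_atTop_nhds_zero_of_lt_one hΛ1)
      (.inr (measure_ne_top μ _))
  have hrem : Tendsto (fun N : ℕ ↦ Λ ^ N * μ (T.symm^[N] ⁻¹' S)) atTop (𝓝 0) :=
    tendsto_of_tendsto_of_tendsto_of_le_of_le tendsto_const_nhds hgeom (fun _ ↦ zero_le)
      fun _ ↦ by gcongr; exact Set.subset_univ _
  have hlim := (ENNReal.tendsto_nat_tsum fun n ↦ Λ ^ n * μ (T.symm^[n] ⁻¹' S ∩ H)).add hrem
  rw [add_zero, ← funext (heig.measure_eq_sum_range_add hT' hH hS)] at hlim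
  exact tendsto_nhds_unique tendsto_const_nhds hlim

theorem measure_preimage_iterate_succ_inter_hole_eq_zero [IsFiniteMeasure μ]
    (heig : IsEigenmeasure T H μ Λ) (hT' : Measurable T.symm) (hH : MeasurableSet H)
    (hΛ0 : Λ ≠ 0) (hΛ1 : Λ < 1) (n : ℕ) :
    μ (T.symm^[n + 1] ⁻¹' H ∩ H) = 0 := by
  have h := heig.measure_eq_tsum hT' hH hΛ1 hH
  rw [tsum_eq_zero_add' ENNReal.summable] at h
  simp only [pow_zero, one_mul, Function.iterate_zero, Set.preimage_id, Set.inter_self] at h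
  have hrest : ∑' k, Λ ^ (k + 1) * μ (T.symm^[k + 1] ⁻¹' H ∩ H) = 0 := by
    rwa [← ENNReal.add_right_inj (measure_ne_top μ H), add_zero, eq_comm]
  exact (mul_eq_zero.mp (ENNReal.tsum_eq_zero.mp hrest n)).resolve_left (pow_ne_zero _ hΛ0)

theorem measure_backwardTrappedSet_inter_hole [IsFiniteMeasure μ]
    (heig : IsEigenmeasure T H μ Λ) (hT' : Measurable T.symm) (hH : MeasurableSet H)
    (hΛ0 : Λ ≠ 0) (hΛ1 : Λ < 1) :
    μ (backwardTrappedSet T H ∩ H) = μ H := by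
  rw [Set.inter_comm]
  refine measure_inter_conull' (measure_mono_null ?_ (measure_iUnion_null
    (heig.measure_preimage_iterate_succ_inter_hole_eq_zero hT' hH hΛ0 hΛ1)))
  rintro x ⟨hxH, hx⟩
  obtain ⟨j, hj⟩ := not_forall.mp (Set.mem_iInter.not.mp hx)
  rw [Set.mem_image_iff_of_inverse
    (Function.LeftInverse.iterate T.symm_apply_apply _)
    (Function.RightInverse.iterate T.apply_symm_apply _)] at hj
  exact Set.mem_iUnion.mpr ⟨j, not_not.mp hj, hxH⟩

theorem eq_sum_map_restrict [IsFiniteMeasure μ] (heig : IsEigenmeasure T H μ Λ)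
    (hT' : Measurable T.symm) (hH : MeasurableSet H) (hΛ1 : Λ < 1) :
    μ = Measure.sum fun n ↦ Λ ^ n • (μ.restrict H).map T.symm^[n] := by
  ext S hS
  simp only [Measure.sum_apply _ hS, Measure.smul_apply, Measure.map_apply (hT'.iterate _) hS,
    Measure.restrict_apply (hT'.iterate _ hS), smul_eq_mul]
  exact heig.measure_eq_tsum hT' hH hΛ1 hS

end IsEigenmeasure

end MeasureTheory

theorem eigenmeasure_representation
    {X : Type*} [MeasurableSpace X]
    (T : X ≃ X) (hT' : Measurable ⇑T.symm)
    (H : Set X) (hH : MeasurableSet H)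
    (μ : Measure X) [IsProbabilityMeasure μ]
    (Λ : ℝ≥0∞) (hΛ0 : 0 < Λ) (hΛ1 : Λ < 1)
    (heig : ∀ S : Set X, MeasurableSet S → μ (⇑T ⁻¹' S ∩ Hᶜ) = Λ * μ S) :
    IsProbabilityMeasure ((1 - Λ)⁻¹ • μ.restrict H) ∧
    ((1 - Λ)⁻¹ • μ.restrict H) ((⋂ j : ℕ, (⇑T)^[j + 1] '' Hᶜ) ∩ H) = 1 ∧
    μ = (1 - Λ) •
        Measure.sum (fun n : ℕ => Λ ^ n • ((1 - Λ)⁻¹ • μ.restrict H).map ((⇑T.symm)^[n])) := by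
  replace heig : IsEigenmeasure T H μ Λ := heig
  have hμH : μ H = 1 - Λ := heig.measure_hole_eq hH
  have hμH0 : μ H ≠ 0 := hμH ▸ (tsub_pos_of_lt hΛ1).ne'
  rw [← hμH]
  change IsProbabilityMeasure μ[|H] ∧ μ[backwardTrappedSet T H ∩ H | H] = 1 ∧
    μ = μ H • Measure.sum fun n ↦ Λ ^ n • μ[|H].map T.symm^[n]
  refine ⟨cond_isProbabilityMeasure hμH0, ?_, ?_⟩
  · rw [cond_apply hH, Set.inter_left_comm, Set.inter_self,
      heig.measure_backwardTrappedSet_inter_hole hT' hH hΛ0.ne' hΛ1,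
      ENNReal.inv_mul_cancel hμH0 (measure_ne_top _ _)]
  · conv_lhs => rw [heig.eq_sum_map_restrict hT' hH hΛ1]
    ext S hS
    simp only [ProbabilityTheory.cond, Measure.map_smul, Measure.smul_apply,
      Measure.sum_apply _ hS, smul_eq_mul, ← ENNReal.tsum_mul_left]
    refine tsum_congr fun n ↦ ?_
    rw [mul_left_comm (Λ ^ n), ENNReal.mul_inv_cancel_left hμH0 (measure_ne_top _ _)]
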